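/- Let E, F be metric vector bundles over an open, possibly incomplete Riemannian manifold (M,g) and let D : C_c^∞(M,E) → C_c^∞(M,F) be a densely defined differential operator with formal adjoint D^t. Then for the symmetric positive operator D^t∘D on L²(M,E): (1) its Friedrich extension satisfies (D^t∘D)^F = (D^t)_max ∘ D_min; (2) the domain of the associated quadratic form Q_{D^t∘D} equals D(D_min), and Q_{D^t∘D}(u,v) = ⟨D_min u, D_min v⟩_{L²(M,F)} for all u,v in this domain. -/
import Mathlib


/-!
STATEMENT 4 (Prop. 2.3 of the paper).  Abstract formalization: `H₁ = L²(M,E)` and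
`H₂ = L²(M,F)` are the Hilbert spaces of square integrable sections, `D` is the differential
operator with domain `C_c^∞(M,E)` and `Dᵗ` its formal adjoint with domain `C_c^∞(M,F)`
(so that `D` maps its domain into the domain of `Dᵗ`).  Then `DᵗD` is the symmetric positive
operator `u ↦ Dᵗ(Du)` with domain `C_c^∞(M,E)`; the Friedrich extension is characterized as in
the paper (Appendix C.1 of Grieser–Lesch as quoted there): `𝒟(B^F) = 𝒟(Q_B) ∩ 𝒟(B*)` with
`B^F = B*` there, where `𝒟(Q_B)` is the set of `u` admitting an approximating sequence from
`𝒟(B)` which is Cauchy for the form norm.  `D_min = D.closure` and `(Dᵗ)_max = D†` (the Hilbert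
space adjoint of `D`). -/

open MeasureTheory Filter Topology
open scoped ENNReal RealInnerProductSpace

noncomputable section

variable {H : Type*} [NormedAddCommGroup H] [InnerProductSpace ℝ H] [CompleteSpace H]

/-- `f` is a sequence in `𝒟(B)` approximating `u` which is Cauchy for the form norm
`(‖·‖² + Q_B(·,·))^{1/2}` of the (symmetric, positive) operator `B`. -/
def IsFormApprox (B : H →ₗ.[ℝ] H) (f : ℕ → B.domain) (u : H) : Prop :=
  Tendsto (fun n => ((f n : H))) atTop (𝓝 u) ∧
    ∀ ε : ℝ, 0 < ε → ∃ N, ∀ m ≥ N, ∀ n ≥ N,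
      ‖((f n : H) - (f m : H))‖ ^ 2 + ⟪B (f n - f m), ((f n : H) - (f m : H))⟫ < ε

/-- The domain `𝒟(Q_B)` of the quadratic form of the symmetric positive operator `B`,
identified with a subset of the Hilbert space. -/
def formDomain (B : H →ₗ.[ℝ] H) : Set H :=
  {u | ∃ f : ℕ → B.domain, IsFormApprox B f u}

/-- `Bf` is the Friedrich extension of the densely defined symmetric positive operator `B`:
`𝒟(B^F) = 𝒟(Q_B) ∩ 𝒟(B*)` and `B^F = B*` on its domain. -/
def IsFriedrichExtension (B Bf : H →ₗ.[ℝ] H) : Prop :=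
  Bf ≤ B.adjoint ∧
    ∀ u : H, u ∈ Bf.domain ↔ u ∈ B.adjoint.domain ∧ u ∈ formDomain B


section AuxGeneric

set_option linter.unusedSectionVars false

variable {E F : Type*} [NormedAddCommGroup E] [InnerProductSpace ℝ E] [CompleteSpace E]
  [NormedAddCommGroup F] [InnerProductSpace ℝ F] [CompleteSpace F]

/-- The Hilbert space adjoint of a densely defined operator is closed. -/
theorem aux_adjoint_isClosed (T : E →ₗ.[ℝ] F) (hT : Dense (T.domain : Set E)) :
    T.adjoint.IsClosed := by
  have hgraph : (T.adjoint.graph : Set (F × E)) =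
      ⋂ z : T.domain, {p : F × E | ⟪p.2, (z : E)⟫ = ⟪p.1, T z⟫} := by
    ext p
    simp only [Set.mem_iInter, Set.mem_setOf_eq, SetLike.mem_coe]
    constructor
    · intro hp z
      rcases T.adjoint.mem_graph_iff.mp hp with ⟨y, hy1, hy2⟩
      rw [← hy1, ← hy2]
      exact LinearPMap.adjoint_isFormalAdjoint hT y z
    · intro hp
      have hmem : p.1 ∈ T.adjoint.domain := LinearPMap.mem_adjoint_domain_of_exists p.1 ⟨p.2, hp⟩
      have : T.adjoint ⟨p.1, hmem⟩ = p.2 := LinearPMap.adjoint_apply_eq hT ⟨p.1, hmem⟩ hp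
      have h2 := (LinearPMap.image_iff hmem).mp this.symm
      simpa using h2
  rw [LinearPMap.IsClosed, hgraph]
  exact isClosed_iInter fun z =>
    isClosed_eq (Continuous.inner continuous_snd continuous_const)
      (Continuous.inner continuous_fst continuous_const)

theorem aux_closure_eq_self {f : E →ₗ.[ℝ] F} (hf : f.IsClosed) : f.closure = f := by
  apply LinearPMap.eq_of_eq_graph
  rw [← hf.isClosable.graph_closure_eq_closure_graph, hf.submodule_topologicalClosure_eq]

end AuxGeneric

variable {H₁ H₂ : Type*} [NormedAddCommGroup H₁] [InnerProductSpace ℝ H₁] [CompleteSpace H₁]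
  [NormedAddCommGroup H₂] [InnerProductSpace ℝ H₂] [CompleteSpace H₂]

/-- The composition `Dᵗ ∘ D` with domain `𝒟(D) = C_c^∞(M,E)`, using that `D` maps its domain
into the domain of `Dᵗ`. -/
noncomputable def compOn (D : H₁ →ₗ.[ℝ] H₂) (Dt : H₂ →ₗ.[ℝ] H₁)
    (hDr : ∀ u : D.domain, D u ∈ Dt.domain) : H₁ →ₗ.[ℝ] H₁ :=
  ⟨D.domain, Dt.toFun.comp (LinearMap.codRestrict Dt.domain D.toFun hDr)⟩

section AuxCompOn

set_option linter.unusedSectionVars false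

section CompOn

variable {D : H₁ →ₗ.[ℝ] H₂} {Dt : H₂ →ₗ.[ℝ] H₁}
  (hadj : D.IsFormalAdjoint Dt) (hDr : ∀ u : D.domain, D u ∈ Dt.domain)

include hadj in
theorem compOn_inner (x y : (compOn D Dt hDr).domain) :
    ⟪(compOn D Dt hDr) x, ((y : H₁))⟫ = ⟪D x, D y⟫ := by
  have h1 : (compOn D Dt hDr) x = Dt ⟨D x, hDr x⟩ := rfl
  have h2 := hadj y ⟨D x, hDr x⟩
  rw [h1, real_inner_comm, ← h2, real_inner_comm]

include hadj in
theorem closure_le_adjoint (hDt : Dense (Dt.domain : Set H₂)) : D.closure ≤ Dt.adjoint := by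
  have hDle : D ≤ Dt.adjoint := (hadj.symm).le_adjoint hDt
  have hc : (Dt.adjoint).IsClosed := aux_adjoint_isClosed Dt hDt
  have := hc.isClosable.closure_mono hDle
  rwa [aux_closure_eq_self hc] at this

include hadj in
theorem compOn_inner_closure (hDt : Dense (Dt.domain : Set H₂))
    (x : (compOn D Dt hDr).domain) {u : H₁} (h : u ∈ D.closure.domain) :
    ⟪(compOn D Dt hDr) x, u⟫ = ⟪(D x : H₂), D.closure ⟨u, h⟩⟫ := by
  have hle := closure_le_adjoint hadj hDt
  have hm : u ∈ Dt.adjoint.domain := hle.1 h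
  have hval : D.closure ⟨u, h⟩ = Dt.adjoint ⟨u, hm⟩ := hle.2 rfl
  have h1 : (compOn D Dt hDr) x = Dt ⟨D x, hDr x⟩ := rfl
  have h2 := LinearPMap.adjoint_isFormalAdjoint hDt ⟨u, hm⟩ ⟨D x, hDr x⟩
  rw [h1, real_inner_comm, ← h2, hval, real_inner_comm]

include hadj in
theorem compOn_form_eq (x y : (compOn D Dt hDr).domain) :
    ⟪(compOn D Dt hDr) (x - y), ((x : H₁) - (y : H₁))⟫ = ‖(D x : H₂) - D y‖ ^ 2 := by
  have h := compOn_inner hadj hDr (x - y) (x - y)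
  have hc : ((x - y : (compOn D Dt hDr).domain) : H₁) = (x : H₁) - (y : H₁) := rfl
  have hd : D (x - y) = D x - D y := D.map_sub x y
  rw [hc, hd] at h
  rw [h, real_inner_self_eq_norm_sq]

include hadj in
theorem mem_closure_graph (hDt : Dense (Dt.domain : Set H₂)) {u : H₁} {w : H₂} :
    (u, w) ∈ closure (D.graph : Set (H₁ × H₂)) ↔
      ∃ h : u ∈ D.closure.domain, D.closure ⟨u, h⟩ = w := by
  have hclosable : D.IsClosable :=
    (aux_adjoint_isClosed Dt hDt).isClosable.leIsClosable ((hadj.symm).le_adjoint hDt)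
  have hg : closure (D.graph : Set (H₁ × H₂)) = (D.closure.graph : Set (H₁ × H₂)) := by
    rw [← hclosable.graph_closure_eq_closure_graph, Submodule.topologicalClosure_coe]
  rw [hg]
  constructor
  · intro hp
    have hdom : u ∈ D.closure.domain := LinearPMap.mem_domain_of_mem_graph hp
    exact ⟨hdom, ((LinearPMap.image_iff hdom).mpr hp).symm⟩
  · rintro ⟨h, rfl⟩
    exact D.closure.mem_graph ⟨u, h⟩

include hadj in
theorem approx_tendsto (hDt : Dense (Dt.domain : Set H₂))
    {f : ℕ → (compOn D Dt hDr).domain} {u : H₁}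
    (hf : IsFormApprox (compOn D Dt hDr) f u) :
    ∃ h : u ∈ D.closure.domain,
      Tendsto (fun n => (D (f n) : H₂)) atTop (𝓝 (D.closure ⟨u, h⟩)) := by
  set p : ℕ → H₁ × H₂ := fun n => ((f n : H₁), (D (f n) : H₂)) with hp_def
  have hcauchy : CauchySeq p := by
    rw [Metric.cauchySeq_iff]
    intro ε hε
    obtain ⟨N, hN⟩ := hf.2 (ε ^ 2) (by positivity)
    refine ⟨N, fun m hm n hn => ?_⟩
    have h1 := hN n hn m hm
    rw [compOn_form_eq hadj hDr (f m) (f n)] at h1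
    have hab : ‖(f m : H₁) - (f n : H₁)‖ ^ 2 + ‖(D (f m) : H₂) - D (f n)‖ ^ 2 < ε ^ 2 := h1
    rw [Prod.dist_eq]
    have e1 : dist (p m).1 (p n).1 = ‖(f m : H₁) - (f n : H₁)‖ := dist_eq_norm _ _
    have e2 : dist (p m).2 (p n).2 = ‖(D (f m) : H₂) - D (f n)‖ := dist_eq_norm _ _
    have l1 : ‖(f m : H₁) - (f n : H₁)‖ < ε :=
      lt_of_pow_lt_pow_left₀ 2 hε.le (by nlinarith [sq_nonneg ‖(D (f m) : H₂) - D (f n)‖])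
    have l2 : ‖(D (f m) : H₂) - D (f n)‖ < ε :=
      lt_of_pow_lt_pow_left₀ 2 hε.le (by nlinarith [sq_nonneg ‖(f m : H₁) - (f n : H₁)‖])
    rw [e1, e2]
    exact max_lt l1 l2
  obtain ⟨q, hq⟩ := cauchySeq_tendsto_of_complete hcauchy
  have h1 : Tendsto (fun n => (p n).1) atTop (𝓝 q.1) := ((continuous_fst.tendsto _).comp hq)
  have h2 : Tendsto (fun n => (p n).2) atTop (𝓝 q.2) := ((continuous_snd.tendsto _).comp hq)
  have hq1 : q.1 = u := tendsto_nhds_unique h1 hf.1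
  have hmem : (u, q.2) ∈ closure (D.graph : Set (H₁ × H₂)) := by
    rw [← hq1]
    refine mem_closure_of_tendsto (by simpa using hq) (Eventually.of_forall fun n => ?_)
    exact D.mem_graph (f n)
  obtain ⟨h, hw⟩ := (mem_closure_graph hadj hDt).mp hmem
  exact ⟨h, hw ▸ h2⟩

include hadj in
theorem exists_approx (hDt : Dense (Dt.domain : Set H₂)) {u : H₁} (h : u ∈ D.closure.domain) :
    ∃ f : ℕ → (compOn D Dt hDr).domain, IsFormApprox (compOn D Dt hDr) f u := by
  have hmem : ((u : H₁), (D.closure ⟨u, h⟩ : H₂)) ∈ closure (D.graph : Set (H₁ × H₂)) :=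
    (mem_closure_graph hadj hDt).mpr ⟨h, rfl⟩
  rcases mem_closure_iff_seq_limit.mp hmem with ⟨p, hp_mem, hp_lim⟩
  choose x hx1 hx2 using fun n => D.mem_graph_iff.mp (hp_mem n)
  refine ⟨x, ?_, ?_⟩
  · have h1 : Tendsto (fun n => (p n).1) atTop (𝓝 u) := ((continuous_fst.tendsto _).comp hp_lim)
    have : (fun n => ((x n : H₁))) = fun n => (p n).1 := funext fun n => hx1 n
    rw [this]
    exact h1
  · intro ε hε
    have hc := Metric.cauchySeq_iff.mp hp_lim.cauchySeq
    obtain ⟨N, hN⟩ := hc (Real.sqrt (ε / 2)) (Real.sqrt_pos.mpr (by linarith))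
    refine ⟨N, fun m hm n hn => ?_⟩
    rw [compOn_form_eq hadj hDr (x n) (x m)]
    have hd := hN n hn m hm
    rw [Prod.dist_eq] at hd
    have e1 : dist (p n).1 (p m).1 = ‖(x n : H₁) - (x m : H₁)‖ := by
      rw [← hx1 n, ← hx1 m]; exact dist_eq_norm _ _
    have e2 : dist (p n).2 (p m).2 = ‖(D (x n) : H₂) - D (x m)‖ := by
      rw [← hx2 n, ← hx2 m]; exact dist_eq_norm _ _
    have l1 : ‖(x n : H₁) - (x m : H₁)‖ < Real.sqrt (ε / 2) := by
      rw [← e1]; exact (le_max_left _ _).trans_lt hd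
    have l2 : ‖(D (x n) : H₂) - D (x m)‖ < Real.sqrt (ε / 2) := by
      rw [← e2]; exact (le_max_right _ _).trans_lt hd
    have hs : Real.sqrt (ε / 2) ^ 2 = ε / 2 := Real.sq_sqrt (by linarith)
    have b1 : ‖(x n : H₁) - (x m : H₁)‖ ^ 2 < ε / 2 := by
      rw [← hs]; exact pow_lt_pow_left₀ l1 (norm_nonneg _) (by norm_num)
    have b2 : ‖(D (x n) : H₂) - D (x m)‖ ^ 2 < ε / 2 := by
      rw [← hs]; exact pow_lt_pow_left₀ l2 (norm_nonneg _) (by norm_num)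
    linarith

end CompOn

end AuxCompOn

/-- Prop. 2.3:  (1) `(Dᵗ∘D)^F = (Dᵗ)_max ∘ D_min` (with
`(Dᵗ)_max = D†`, `D_min = D.closure`);  (2) `𝒟(Q_{DᵗD}) = 𝒟(D_min)` and
`Q_{DᵗD}(u,v) = ⟪D_min u, D_min v⟫` for all `u, v` in this common domain. -/
theorem friedrich_extension_of_formal_laplacian
    (D : H₁ →ₗ.[ℝ] H₂) (hD : Dense (D.domain : Set H₁))
    (Dt : H₂ →ₗ.[ℝ] H₁) (hDt : Dense (Dt.domain : Set H₂))
    (hadj : D.IsFormalAdjoint Dt)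
    (hDr : ∀ u : D.domain, D u ∈ Dt.domain)
    (Pf : H₁ →ₗ.[ℝ] H₁) (hPf : IsFriedrichExtension (compOn D Dt hDr) Pf) :
    -- (1) `(Dᵗ∘D)^F = (Dᵗ)_max ∘ D_min`, as an equality of unbounded operators
    ((∀ u : H₁,
        u ∈ Pf.domain ↔ ∃ h : u ∈ D.closure.domain, D.closure ⟨u, h⟩ ∈ D.adjoint.domain) ∧
      (∀ (u : H₁) (hu : u ∈ Pf.domain) (h₁ : u ∈ D.closure.domain)
          (h₂ : D.closure ⟨u, h₁⟩ ∈ D.adjoint.domain),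
        Pf ⟨u, hu⟩ = D.adjoint ⟨D.closure ⟨u, h₁⟩, h₂⟩)) ∧
    -- (2) `𝒟(Q_{DᵗD}) = 𝒟(D_min)` ...
    formDomain (compOn D Dt hDr) = (D.closure.domain : Set H₁) ∧
    -- ... and `Q_{DᵗD}(u,v) = ⟪D_min u, D_min v⟫` on the form domain
    (∀ (u v : D.closure.domain) (f g : ℕ → (compOn D Dt hDr).domain),
      IsFormApprox (compOn D Dt hDr) f (u : H₁) → IsFormApprox (compOn D Dt hDr) g (v : H₁) →
        Tendsto (fun n => ⟪(compOn D Dt hDr) (f n), ((g n : H₁))⟫) atTop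
          (𝓝 ⟪D.closure u, D.closure v⟫)) := by
  classical
  have hBdense : Dense (((compOn D Dt hDr).domain : Set H₁)) := hD
  have h2a : formDomain (compOn D Dt hDr) = (D.closure.domain : Set H₁) := by
    ext u
    constructor
    · rintro ⟨f, hf⟩
      obtain ⟨h, -⟩ := approx_tendsto hadj hDr hDt hf
      exact h
    · intro h
      exact exists_approx hadj hDr hDt h
  refine ⟨⟨?_, ?_⟩, h2a, ?_⟩
  · intro u
    rw [hPf.2 u]
    have hform : u ∈ formDomain (compOn D Dt hDr) ↔ u ∈ D.closure.domain := by
      rw [h2a]; exact Iff.rfl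
    constructor
    · rintro ⟨hu, hu2⟩
      have h : u ∈ D.closure.domain := hform.mp hu2
      refine ⟨h, ?_⟩
      apply LinearPMap.mem_adjoint_domain_of_exists
      refine ⟨(compOn D Dt hDr).adjoint ⟨u, hu⟩, fun x => ?_⟩
      calc ⟪(compOn D Dt hDr).adjoint ⟨u, hu⟩, (x : H₁)⟫
          = ⟪u, (compOn D Dt hDr) x⟫ := LinearPMap.adjoint_isFormalAdjoint hBdense ⟨u, hu⟩ x
        _ = ⟪(compOn D Dt hDr) x, u⟫ := real_inner_comm _ _
        _ = ⟪(D x : H₂), D.closure ⟨u, h⟩⟫ := compOn_inner_closure hadj hDr hDt x h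
        _ = ⟪D.closure ⟨u, h⟩, (D x : H₂)⟫ := real_inner_comm _ _
    · rintro ⟨h, h₂⟩
      refine ⟨?_, hform.mpr h⟩
      apply LinearPMap.mem_adjoint_domain_of_exists
      refine ⟨D.adjoint ⟨D.closure ⟨u, h⟩, h₂⟩, fun x => ?_⟩
      calc ⟪D.adjoint ⟨D.closure ⟨u, h⟩, h₂⟩, (x : H₁)⟫
          = ⟪(D.closure ⟨u, h⟩ : H₂), D x⟫ := LinearPMap.adjoint_isFormalAdjoint hD _ x
        _ = ⟪(D x : H₂), D.closure ⟨u, h⟩⟫ := real_inner_comm _ _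
        _ = ⟪(compOn D Dt hDr) x, u⟫ := (compOn_inner_closure hadj hDr hDt x h).symm
        _ = ⟪u, (compOn D Dt hDr) x⟫ := real_inner_comm _ _
  · intro u hu h₁ h₂
    have hu' := (hPf.2 u).mp hu
    have e0 : Pf ⟨u, hu⟩ = (compOn D Dt hDr).adjoint ⟨u, hu'.1⟩ := hPf.1.2 rfl
    rw [e0]
    apply LinearPMap.adjoint_apply_eq hBdense
    intro x
    calc ⟪D.adjoint ⟨D.closure ⟨u, h₁⟩, h₂⟩, (x : H₁)⟫
        = ⟪(D.closure ⟨u, h₁⟩ : H₂), D x⟫ := LinearPMap.adjoint_isFormalAdjoint hD _ x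
      _ = ⟪(D x : H₂), D.closure ⟨u, h₁⟩⟫ := real_inner_comm _ _
      _ = ⟪(compOn D Dt hDr) x, u⟫ := (compOn_inner_closure hadj hDr hDt x h₁).symm
      _ = ⟪u, (compOn D Dt hDr) x⟫ := real_inner_comm _ _
  · intro u v f g hf hg
    obtain ⟨hu', hfu⟩ := approx_tendsto hadj hDr hDt hf
    obtain ⟨hv', hgv⟩ := approx_tendsto hadj hDr hDt hg
    have eu : (⟨(u : H₁), hu'⟩ : D.closure.domain) = u := Subtype.coe_eta _ _
    have ev : (⟨(v : H₁), hv'⟩ : D.closure.domain) = v := Subtype.coe_eta _ _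
    rw [eu] at hfu
    rw [ev] at hgv
    have heq : (fun n => ⟪(compOn D Dt hDr) (f n), ((g n : H₁))⟫)
        = fun n => ⟪(D (f n) : H₂), D (g n)⟫ :=
      funext fun n => compOn_inner hadj hDr (f n) (g n)
    rw [heq]
    exact hfu.inner hgv


end
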